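/- Theorem 1 (reduction of a UFTOC subproblem): under the UFTOC setup with the preliminary (zero-terminal) Riccati recursion well defined, define Q̂_x = P_{0,0}, l̂_x = −Ψ_{0,0}, ĉ = c̄_{0,0}, Q̄ = blockdiag(G_{0,1},…,G_{0,N}), and Q̂_w = B̂ = S Q̄⁻¹ Sᵀ ∈ ℝ^{n_x×n_x}, with Â, S, â the closed-loop quantities of the preliminary feedback. Then for every symmetric positive semidefinite P̂ ∈ ℝ^{n_x×n_x}, every Ψ̂ ∈ ℝ^{n_x}, every ĉ' ∈ ℝ and every x̂ ∈ ℝ^{n_x}: the infimum over all trajectories (x,w) with x_0 = x̂ of Σ_{t=0}^{N−1}( ½ [x_t;w_t]ᵀ Q_t [x_t;w_t] + l_tᵀ [x_t;w_t] + c_t ) + ½ x_Nᵀ P̂ x_N − Ψ̂ᵀ x_N + ĉ' equals the infimum over ŵ ∈ ℝ^{n_x} of ½ x̂ᵀ Q̂_x x̂ + ½ ŵᵀ Q̂_w ŵ + l̂_xᵀ x̂ + ĉ + ½ x̂_Nᵀ P̂ x̂_N − Ψ̂ᵀ x̂_N + ĉ', where x̂_N = Â x̂ + B̂ ŵ + â;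 moreover both infima are attained. -/

import Mathlib

/-!
Completing the square in each step of the zero-terminal Riccati recursion shows that along any
trajectory the stage costs sum to `½ x̂ᵀ P₀ x̂ − Ψ₀ᵀ x̂ + c̄₀ + ½ vᵀ Q̄ v`, where `v` stacks the
deviations `vₜ = wₜ − K x_t − k` from the preliminary feedback, and by variation of constants the
final state is `Â x̂ + â + S v`. Every `v` is realised by some trajectory, so the subproblem is the
minimisation of `½ vᵀ Q̄ v + J(Â x̂ + â + S v)` over `v`, with `J` the terminal cost. This is
strictly convex, and its minimiser satisfies `Q̄ v = Sᵀ ŵ` with `ŵ = −∇J` at the optimal final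
state; hence it has the form `v = Q̄⁻¹ Sᵀ ŵ`, and on such `v` the objective is exactly the reduced
cost at `ŵ`, since `S Q̄⁻¹ Sᵀ = Q̂_w`.
-/

open Matrix Finset

/-- Ordered product of (closed-loop) matrices: `stm nx Ab i j = Ab (j-1) * ⋯ * Ab i`
for `i ≤ j`, and the identity otherwise (a state transition matrix). -/
noncomputable def stm (nx : ℕ) (Ab : ℕ → Matrix (Fin nx) (Fin nx) ℝ) :
    ℕ → ℕ → Matrix (Fin nx) (Fin nx) ℝ
  | _, 0 => 1
  | i, (j + 1) => if i ≤ j then Ab j * stm nx Ab i j else 1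

/-- Cost of the UFTOC subproblem with terminal data `P̂`, `Ψ̂`, `ĉ'`. -/
noncomputable def subCost (nx nw N : ℕ)
    (Qx : ℕ → Matrix (Fin nx) (Fin nx) ℝ)
    (Qxw : ℕ → Matrix (Fin nx) (Fin nw) ℝ)
    (Qw : ℕ → Matrix (Fin nw) (Fin nw) ℝ)
    (lx : ℕ → Fin nx → ℝ) (lw : ℕ → Fin nw → ℝ) (c : ℕ → ℝ)
    (Ph : Matrix (Fin nx) (Fin nx) ℝ) (Ψh : Fin nx → ℝ) (ch' : ℝ)
    (x : ℕ → Fin nx → ℝ) (w : ℕ → Fin nw → ℝ) : ℝ :=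
  (∑ t ∈ Finset.range N,
      ((1 / 2) * (Sum.elim (x t) (w t) ⬝ᵥ
          (Matrix.fromBlocks (Qx t) (Qxw t) (Qxw t)ᵀ (Qw t) *ᵥ Sum.elim (x t) (w t)))
        + Sum.elim (lx t) (lw t) ⬝ᵥ Sum.elim (x t) (w t) + c t))
    + (1 / 2) * (x N ⬝ᵥ (Ph *ᵥ x N)) - Ψh ⬝ᵥ x N + ch'

/-- Cost of the reduced UFTOC subproblem of Theorem 1 (with `B̂ = Q̂_w`). -/
noncomputable def redCost (nx : ℕ)
    (Qxh Qwh Ah : Matrix (Fin nx) (Fin nx) ℝ)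
    (lxh ah : Fin nx → ℝ) (ch : ℝ)
    (Ph : Matrix (Fin nx) (Fin nx) ℝ) (Ψh : Fin nx → ℝ) (ch' : ℝ)
    (xh wh : Fin nx → ℝ) : ℝ :=
  (1 / 2) * (xh ⬝ᵥ (Qxh *ᵥ xh)) + (1 / 2) * (wh ⬝ᵥ (Qwh *ᵥ wh)) + lxh ⬝ᵥ xh + ch
    + (1 / 2) * ((Ah *ᵥ xh + Qwh *ᵥ wh + ah) ⬝ᵥ (Ph *ᵥ (Ah *ᵥ xh + Qwh *ᵥ wh + ah)))
    - Ψh ⬝ᵥ (Ah *ᵥ xh + Qwh *ᵥ wh + ah) + ch'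

namespace Matrix

variable {m n : Type*} [Fintype m] [Fintype n]

theorem mulVec_dotProduct (M : Matrix m n ℝ) (u : n → ℝ) (v : m → ℝ) :
    M *ᵥ u ⬝ᵥ v = u ⬝ᵥ Mᵀ *ᵥ v := by
  rw [dotProduct_transpose_mulVec, dotProduct_comm]

theorem IsSymm.dotProduct_mulVec_comm {M : Matrix n n ℝ} (hM : M.IsSymm) (u v : n → ℝ) :
    u ⬝ᵥ M *ᵥ v = v ⬝ᵥ M *ᵥ u := by
  conv_lhs => rw [← hM.eq, dotProduct_transpose_mulVec]

theorem IsSymm.transpose_mul_mul {l : Type*} {P : Matrix m m ℝ} (hP : P.IsSymm)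
    (A : Matrix m l ℝ) :
    (Aᵀ * P * A).IsSymm := by
  simp [IsSymm, transpose_mul, hP.eq, Matrix.mul_assoc]

theorem sumElim_dotProduct_fromBlocks_mulVec (Q₁₁ : Matrix m m ℝ) (Q₁₂ : Matrix m n ℝ)
    (Q₂₂ : Matrix n n ℝ) (x : m → ℝ) (w : n → ℝ) :
    Sum.elim x w ⬝ᵥ fromBlocks Q₁₁ Q₁₂ Q₁₂ᵀ Q₂₂ *ᵥ Sum.elim x w
      = x ⬝ᵥ Q₁₁ *ᵥ x + 2 * (x ⬝ᵥ Q₁₂ *ᵥ w) + w ⬝ᵥ Q₂₂ *ᵥ w := by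
  rw [fromBlocks_mulVec, sumElim_dotProduct_sumElim, Sum.elim_comp_inl, Sum.elim_comp_inr,
    dotProduct_add, dotProduct_add, dotProduct_transpose_mulVec]
  ring

theorem IsSymm.affine_dotProduct_mulVec_affine {l : Type*} [Fintype l] {P : Matrix n n ℝ}
    (hP : P.IsSymm) (A : Matrix n m ℝ) (B : Matrix n l ℝ) (x : m → ℝ) (w : l → ℝ)
    (a : n → ℝ) :
    (A *ᵥ x + B *ᵥ w + a) ⬝ᵥ P *ᵥ (A *ᵥ x + B *ᵥ w + a)
      = x ⬝ᵥ (Aᵀ * P * A) *ᵥ x + 2 * (x ⬝ᵥ (Aᵀ * P * B) *ᵥ w) + w ⬝ᵥ (Bᵀ * P * B) *ᵥ w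
        + 2 * (x ⬝ᵥ Aᵀ *ᵥ (P *ᵥ a)) + 2 * (w ⬝ᵥ Bᵀ *ᵥ (P *ᵥ a)) + a ⬝ᵥ P *ᵥ a := by
  have hxw : w ⬝ᵥ (Bᵀ * P * A) *ᵥ x = x ⬝ᵥ (Aᵀ * P * B) *ᵥ w := by
    rw [← dotProduct_transpose_mulVec]; simp [transpose_mul, hP.eq, Matrix.mul_assoc]
  have hax : a ⬝ᵥ (P * A) *ᵥ x = x ⬝ᵥ Aᵀ *ᵥ (P *ᵥ a) := by
    rw [← dotProduct_transpose_mulVec]; simp [transpose_mul, hP.eq, mulVec_mulVec]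
  have haw : a ⬝ᵥ (P * B) *ᵥ w = w ⬝ᵥ Bᵀ *ᵥ (P *ᵥ a) := by
    rw [← dotProduct_transpose_mulVec]; simp [transpose_mul, hP.eq, mulVec_mulVec]
  simp only [mulVec_add, add_dotProduct, dotProduct_add, mulVec_dotProduct, mulVec_mulVec,
    Matrix.mul_assoc] at hxw hax haw ⊢
  linear_combination hxw + hax + haw

theorem IsSymm.dotProduct_mulVec_complete_square {G : Matrix n n ℝ} (hG : G.IsSymm)
    {H : Matrix m n ℝ} {K : Matrix n m ℝ} (hGK : G * K = -Hᵀ) (k : n → ℝ) (x : m → ℝ)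
    (w : n → ℝ) :
    w ⬝ᵥ G *ᵥ w + 2 * (x ⬝ᵥ H *ᵥ w) - 2 * (w ⬝ᵥ G *ᵥ k)
      = (w - K *ᵥ x - k) ⬝ᵥ G *ᵥ (w - K *ᵥ x - k) - x ⬝ᵥ (Kᵀ * G * K) *ᵥ x
        + 2 * (x ⬝ᵥ H *ᵥ k) - k ⬝ᵥ G *ᵥ k := by
  have hGKx : G *ᵥ (K *ᵥ x) = -(Hᵀ *ᵥ x) := by rw [mulVec_mulVec, hGK, neg_mulVec]
  have hKx : K *ᵥ x ⬝ᵥ G *ᵥ (K *ᵥ x) = x ⬝ᵥ (Kᵀ * G * K) *ᵥ x := by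
    rw [mulVec_dotProduct, ← mulVec_mulVec, ← mulVec_mulVec]
  have hw : K *ᵥ x ⬝ᵥ G *ᵥ w = -(x ⬝ᵥ H *ᵥ w) := by
    rw [hG.dotProduct_mulVec_comm, hGKx, dotProduct_neg, dotProduct_transpose_mulVec]
  have hk : K *ᵥ x ⬝ᵥ G *ᵥ k = -(x ⬝ᵥ H *ᵥ k) := by
    rw [hG.dotProduct_mulVec_comm, hGKx, dotProduct_neg, dotProduct_transpose_mulVec]
  simp only [mulVec_sub, sub_dotProduct, dotProduct_sub, hKx]
  rw [hG.dotProduct_mulVec_comm w (K *ᵥ x), hG.dotProduct_mulVec_comm k (K *ᵥ x), hw, hk,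
    hG.dotProduct_mulVec_comm k w]
  ring

theorem PosSemidef.quadratic_le_of_mulVec_eq_neg {M : Matrix n n ℝ} (hM : M.PosSemidef)
    {b v₀ : n → ℝ} (hv₀ : M *ᵥ v₀ = -b) (v : n → ℝ) :
    1 / 2 * (v₀ ⬝ᵥ M *ᵥ v₀) + b ⬝ᵥ v₀ ≤ 1 / 2 * (v ⬝ᵥ M *ᵥ v) + b ⬝ᵥ v := by
  -- the gap is `½ (v - v₀)ᵀ M (v - v₀)`
  have hnonneg := hM.dotProduct_mulVec_nonneg (v - v₀)
  have hv : v ⬝ᵥ M *ᵥ v₀ = -(b ⬝ᵥ v) := by rw [hv₀, dotProduct_neg, dotProduct_comm]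
  have hv₀' : v₀ ⬝ᵥ M *ᵥ v₀ = -(b ⬝ᵥ v₀) := by rw [hv₀, dotProduct_neg, dotProduct_comm]
  simp only [star_trivial, mulVec_sub, dotProduct_sub, sub_dotProduct,
    (isHermitian_iff_isSymm.mp hM.1).dotProduct_mulVec_comm v₀ v, hv, hv₀'] at hnonneg
  linarith

theorem nonsing_inv_mulVec_transpose_dotProduct [DecidableEq n] {Q : Matrix n n ℝ}
    (hQ : IsUnit Q.det) (S : Matrix m n ℝ) (ŵ : m → ℝ) :
    Q⁻¹ *ᵥ Sᵀ *ᵥ ŵ ⬝ᵥ Q *ᵥ (Q⁻¹ *ᵥ Sᵀ *ᵥ ŵ) = ŵ ⬝ᵥ (S * Q⁻¹ * Sᵀ) *ᵥ ŵ := by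
  rw [mulVec_mulVec _ Q, mul_nonsing_inv _ hQ, one_mulVec, dotProduct_transpose_mulVec,
    mulVec_mulVec, mulVec_mulVec, Matrix.mul_assoc]

theorem dotProduct_blockDiagonal_mulVec {o : Type*} [Fintype o] [DecidableEq o]
    (D : o → Matrix n n ℝ) (u v : n × o → ℝ) :
    u ⬝ᵥ blockDiagonal D *ᵥ v = ∑ k, (fun i => u (i, k)) ⬝ᵥ D k *ᵥ fun i => v (i, k) := by
  rw [dotProduct, Fintype.sum_prod_type_right]
  refine sum_congr rfl fun k _ => sum_congr rfl fun i _ => ?_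
  simp [mulVec, dotProduct, Fintype.sum_prod_type_right, blockDiagonal_apply']

theorem PosDef.blockDiagonal {o : Type*} [Fintype o] [DecidableEq o]
    {D : o → Matrix n n ℝ} (hD : ∀ k, (D k).PosDef) : (blockDiagonal D).PosDef := by
  refine .of_dotProduct_mulVec_pos ?_ fun x hx => ?_
  · rw [IsHermitian, blockDiagonal_conjTranspose]
    exact congrArg _ (funext fun k => (hD k).1)
  obtain ⟨⟨i, k⟩, hik⟩ := Function.ne_iff.mp hx
  rw [star_trivial, dotProduct_blockDiagonal_mulVec]
  exact sum_pos' (fun k _ => (hD k).posSemidef.dotProduct_mulVec_nonneg _)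
    ⟨k, mem_univ _, (hD k).dotProduct_mulVec_pos fun h => hik (congrFun h i)⟩

end Matrix

section Costs

variable {m n : Type*} [Fintype m] [Fintype n]

noncomputable def quadCost (P : Matrix m m ℝ) (Ψ : m → ℝ) (c : ℝ) (x : m → ℝ) : ℝ :=
  1 / 2 * (x ⬝ᵥ P *ᵥ x) - Ψ ⬝ᵥ x + c

noncomputable def stageCost (Qx : Matrix m m ℝ) (Qxw : Matrix m n ℝ) (Qw : Matrix n n ℝ)
    (lx : m → ℝ) (lw : n → ℝ) (c : ℝ) (x : m → ℝ) (w : n → ℝ) : ℝ :=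
  1 / 2 * (Sum.elim x w ⬝ᵥ fromBlocks Qx Qxw Qxwᵀ Qw *ᵥ Sum.elim x w)
    + Sum.elim lx lw ⬝ᵥ Sum.elim x w + c

@[simp]
theorem quadCost_zero (x : m → ℝ) : quadCost 0 0 0 x = 0 := by
  simp [quadCost]

theorem quadCost_add_mulVec {P : Matrix m m ℝ} (hP : P.IsSymm) (Ψ : m → ℝ) (c : ℝ)
    (S : Matrix m n ℝ) (y : m → ℝ) (v : n → ℝ) :
    quadCost P Ψ c (y + S *ᵥ v) = quadCost P Ψ c y + 1 / 2 * (v ⬝ᵥ (Sᵀ * P * S) *ᵥ v)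
      + Sᵀ *ᵥ (P *ᵥ y - Ψ) ⬝ᵥ v := by
  have hyv : S *ᵥ v ⬝ᵥ P *ᵥ y = y ⬝ᵥ P *ᵥ (S *ᵥ v) := hP.dotProduct_mulVec_comm _ _
  simp only [quadCost, mulVec_add, dotProduct_add, add_dotProduct, hyv]
  simp only [mulVec_sub, sub_dotProduct, mulVec_dotProduct, transpose_mul, transpose_transpose,
    hP.eq, mulVec_mulVec, Matrix.mul_assoc]
  ring

theorem stageCost_add_quadCost {A : Matrix m m ℝ} {B : Matrix m n ℝ} {a : m → ℝ}
    {Qx : Matrix m m ℝ} {Qxw : Matrix m n ℝ} {Qw : Matrix n n ℝ} {lx : m → ℝ} {lw : n → ℝ}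
    {c : ℝ} {P' : Matrix m m ℝ} {Ψ' : m → ℝ} {c' : ℝ} {G : Matrix n n ℝ} {K : Matrix n m ℝ}
    {k : n → ℝ} {P : Matrix m m ℝ} {Ψ : m → ℝ} {c₀ : ℝ}
    (hP' : P'.IsSymm) (hG : G.IsSymm)
    (hGdef : G = Qw + Bᵀ * P' * B)
    (hGK : G * K = -(Qxw + Aᵀ * P' * B)ᵀ)
    (hGk : G *ᵥ k = Bᵀ *ᵥ Ψ' - lw - Bᵀ *ᵥ (P' *ᵥ a))
    (hP : P = Qx + Aᵀ * P' * A - Kᵀ * G * K)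
    (hΨ : Ψ = Aᵀ *ᵥ Ψ' - (Qxw + Aᵀ * P' * B) *ᵥ k - lx - Aᵀ *ᵥ (P' *ᵥ a))
    (hc₀ : c₀ = c' + 1 / 2 * (a ⬝ᵥ P' *ᵥ a) - Ψ' ⬝ᵥ a - 1 / 2 * (k ⬝ᵥ G *ᵥ k) + c)
    (x : m → ℝ) (w : n → ℝ) :
    stageCost Qx Qxw Qw lx lw c x w + quadCost P' Ψ' c' (A *ᵥ x + B *ᵥ w + a)
      = quadCost P Ψ c₀ x + 1 / 2 * ((w - K *ᵥ x - k) ⬝ᵥ G *ᵥ (w - K *ᵥ x - k)) := by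
  have hsq := hG.dotProduct_mulVec_complete_square hGK k x w
  have hy := hP'.affine_dotProduct_mulVec_affine A B x w a
  have hGw : w ⬝ᵥ G *ᵥ w = w ⬝ᵥ Qw *ᵥ w + w ⬝ᵥ (Bᵀ * P' * B) *ᵥ w := by
    rw [hGdef, add_mulVec, dotProduct_add]
  have hGkw : w ⬝ᵥ G *ᵥ k = w ⬝ᵥ Bᵀ *ᵥ Ψ' - lw ⬝ᵥ w - w ⬝ᵥ Bᵀ *ᵥ (P' *ᵥ a) := by
    rw [hGk, dotProduct_sub, dotProduct_sub, dotProduct_comm w lw]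
  have hΨx : Ψ ⬝ᵥ x = x ⬝ᵥ Aᵀ *ᵥ Ψ' - (x ⬝ᵥ Qxw *ᵥ k + x ⬝ᵥ (Aᵀ * P' * B) *ᵥ k) - lx ⬝ᵥ x
      - x ⬝ᵥ Aᵀ *ᵥ (P' *ᵥ a) := by
    rw [hΨ, dotProduct_comm]
    simp only [dotProduct_sub, add_mulVec, dotProduct_add, dotProduct_comm x lx]
  have hPx : x ⬝ᵥ P *ᵥ x = x ⬝ᵥ Qx *ᵥ x + x ⬝ᵥ (Aᵀ * P' * A) *ᵥ x
      - x ⬝ᵥ (Kᵀ * G * K) *ᵥ x := by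
    rw [hP, sub_mulVec, add_mulVec, dotProduct_sub, dotProduct_add]
  have hψ : Ψ' ⬝ᵥ (A *ᵥ x + B *ᵥ w + a) = x ⬝ᵥ Aᵀ *ᵥ Ψ' + w ⬝ᵥ Bᵀ *ᵥ Ψ' + Ψ' ⬝ᵥ a := by
    simp only [dotProduct_add, dotProduct_transpose_mulVec]
  simp only [add_mulVec, dotProduct_add] at hsq
  simp only [stageCost, quadCost, sumElim_dotProduct_fromBlocks_mulVec,
    sumElim_dotProduct_sumElim]
  rw [hy, hψ, hPx, hΨx, hc₀]
  linear_combination (1 / 2) * hsq - (1 / 2) * hGw + hGkw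

theorem exists_reduced_minimizer [DecidableEq n] {Q : Matrix n n ℝ} (hQ : Q.PosDef)
    {P : Matrix m m ℝ} (hP : P.PosSemidef) (S : Matrix m n ℝ) (y Ψ : m → ℝ) (c : ℝ) :
    ∃ ŵ : m → ℝ, ∀ v, 1 / 2 * (Q⁻¹ *ᵥ Sᵀ *ᵥ ŵ ⬝ᵥ Q *ᵥ (Q⁻¹ *ᵥ Sᵀ *ᵥ ŵ))
        + quadCost P Ψ c (y + S *ᵥ (Q⁻¹ *ᵥ Sᵀ *ᵥ ŵ))
      ≤ 1 / 2 * (v ⬝ᵥ Q *ᵥ v) + quadCost P Ψ c (y + S *ᵥ v) := by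
  have hQdet : IsUnit Q.det := (isUnit_iff_isUnit_det Q).mp hQ.isUnit
  set M := Q + Sᵀ * P * S
  set b := Sᵀ *ᵥ (P *ᵥ y - Ψ)
  have hM : M.PosDef := hQ.add_posSemidef (by simpa using hP.conjTranspose_mul_mul_same S)
  have hMdet : IsUnit M.det := (isUnit_iff_isUnit_det M).mp hM.isUnit
  set v₀ := M⁻¹ *ᵥ -b
  have hv₀ : M *ᵥ v₀ = -b := by rw [mulVec_mulVec, mul_nonsing_inv _ hMdet, one_mulVec]
  have hF : ∀ v, 1 / 2 * (v ⬝ᵥ Q *ᵥ v) + quadCost P Ψ c (y + S *ᵥ v)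
      = 1 / 2 * (v ⬝ᵥ M *ᵥ v) + b ⬝ᵥ v + quadCost P Ψ c y := by
    intro v
    rw [quadCost_add_mulVec (isHermitian_iff_isSymm.mp hP.1), add_mulVec, dotProduct_add]
    ring
  -- `ŵ` is minus the gradient of the terminal cost at the optimal final state `y + S v₀`;
  -- stationarity of `v₀` says exactly `Q v₀ = Sᵀ ŵ`.
  refine ⟨Ψ - P *ᵥ (y + S *ᵥ v₀), fun v => ?_⟩
  have hQv₀ : Q *ᵥ v₀ = Sᵀ *ᵥ (Ψ - P *ᵥ (y + S *ᵥ v₀)) := by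
    have hsplit : Q *ᵥ v₀ + (Sᵀ * P * S) *ᵥ v₀ = -b := by rw [← add_mulVec]; exact hv₀
    rw [eq_sub_of_add_eq hsplit]
    simp only [b, mulVec_sub, mulVec_add, mulVec_mulVec, Matrix.mul_assoc]
    abel
  rw [← hQv₀, mulVec_mulVec, nonsing_inv_mul _ hQdet, one_mulVec, hF, hF]
  linarith [hM.posSemidef.quadratic_le_of_mulVec_eq_neg hv₀ v]

end Costs

theorem sum_range_add_eq_of_step_eq {X W : Type*} {N : ℕ} {ℓ r : ℕ → X → W → ℝ}
    {V : ℕ → X → ℝ} {f : ℕ → X → W → X}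
    (hV : ∀ t < N, ∀ x w, ℓ t x w + V (t + 1) (f t x w) = V t x + r t x w)
    {x : ℕ → X} {w : ℕ → W} (hx : ∀ t < N, x (t + 1) = f t (x t) (w t)) :
    ∑ t ∈ range N, ℓ t (x t) (w t) + V N (x N)
      = V 0 (x 0) + ∑ t ∈ range N, r t (x t) (w t) := by
  induction N with
  | zero => simp
  | succ N ih =>
    rw [sum_range_succ, sum_range_succ, hx N N.lt_succ_self, add_assoc, hV N N.lt_succ_self,
      ← add_assoc, ih (fun t ht => hV t (by omega)) (fun t ht => hx t (by omega))]
    ring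

theorem stm_self (nx : ℕ) (Ab : ℕ → Matrix (Fin nx) (Fin nx) ℝ) (i : ℕ) : stm nx Ab i i = 1 := by
  cases i <;> simp [stm]

theorem stm_succ_of_le (nx : ℕ) (Ab : ℕ → Matrix (Fin nx) (Fin nx) ℝ) {i j : ℕ} (h : i ≤ j) :
    stm nx Ab i (j + 1) = Ab j * stm nx Ab i j := by
  simp [stm, h]

theorem eq_stm_mulVec_add_sum {nx N : ℕ} {Ab : ℕ → Matrix (Fin nx) (Fin nx) ℝ}
    {d x : ℕ → Fin nx → ℝ} (hx : ∀ t < N, x (t + 1) = Ab t *ᵥ x t + d t) :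
    x N = stm nx Ab 0 N *ᵥ x 0 + ∑ τ ∈ range N, stm nx Ab (τ + 1) N *ᵥ d τ := by
  induction N with
  | zero => simp [stm]
  | succ N ih =>
    have hsum : ∑ τ ∈ range N, stm nx Ab (τ + 1) (N + 1) *ᵥ d τ
        = Ab N *ᵥ ∑ τ ∈ range N, stm nx Ab (τ + 1) N *ᵥ d τ := by
      rw [mulVec_sum]
      exact sum_congr rfl fun τ hτ => by
        rw [stm_succ_of_le nx Ab (mem_range.mp hτ), mulVec_mulVec]
    rw [hx N N.lt_succ_self, ih fun t ht => hx t (by omega), sum_range_succ, hsum, stm_self,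
      one_mulVec, stm_succ_of_le nx Ab N.zero_le, ← mulVec_mulVec, mulVec_add]
    abel

def stackVec {n : Type*} (N : ℕ) (v : ℕ → n → ℝ) : n × Fin N → ℝ := fun p => v p.2 p.1

theorem mulVec_stackVec {m n : Type*} [Fintype n] (N : ℕ) (M : ℕ → Matrix m n ℝ)
    (v : ℕ → n → ℝ) :
    (fun i p => M p.2 i p.1 : Matrix m (n × Fin N) ℝ) *ᵥ stackVec N v
      = ∑ τ ∈ range N, M τ *ᵥ v τ := by
  funext i
  rw [Finset.sum_apply, ← Fin.sum_univ_eq_sum_range (fun τ => (M τ *ᵥ v τ) i)]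
  simp only [mulVec, dotProduct, Fintype.sum_prod_type_right, stackVec]

theorem stackVec_dotProduct_blockDiagonal_mulVec {n : Type*} [Fintype n] (N : ℕ)
    (D : ℕ → Matrix n n ℝ) (v : ℕ → n → ℝ) :
    stackVec N v ⬝ᵥ blockDiagonal (fun τ : Fin N => D τ) *ᵥ stackVec N v
      = ∑ τ ∈ range N, v τ ⬝ᵥ D τ *ᵥ v τ := by
  rw [dotProduct_blockDiagonal_mulVec, ← Fin.sum_univ_eq_sum_range (fun τ => v τ ⬝ᵥ D τ *ᵥ v τ)]
  rfl

theorem closedLoop_final_state {nx nw N : ℕ} {A : ℕ → Matrix (Fin nx) (Fin nx) ℝ}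
    {B : ℕ → Matrix (Fin nx) (Fin nw) ℝ} {a : ℕ → Fin nx → ℝ} (K : ℕ → Matrix (Fin nw) (Fin nx) ℝ)
    (k : ℕ → Fin nw → ℝ) {x : ℕ → Fin nx → ℝ} {w : ℕ → Fin nw → ℝ}
    (hx : ∀ t < N, x (t + 1) = A t *ᵥ x t + B t *ᵥ w t + a t) :
    x N = stm nx (fun t => A t + B t * K (t + 1)) 0 N *ᵥ x 0
      + ∑ τ ∈ range N,
          stm nx (fun t => A t + B t * K (t + 1)) (τ + 1) N *ᵥ (a τ + B τ *ᵥ k (τ + 1))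
      + (fun i p => (stm nx (fun t => A t + B t * K (t + 1)) ((p.2 : ℕ) + 1) N * B (p.2 : ℕ)) i p.1
          : Matrix (Fin nx) (Fin nw × Fin N) ℝ)
        *ᵥ stackVec N fun t => w t - K (t + 1) *ᵥ x t - k (t + 1) := by
  have hcl : ∀ t < N, x (t + 1) = (A t + B t * K (t + 1)) *ᵥ x t
      + (a t + B t *ᵥ k (t + 1) + B t *ᵥ (w t - K (t + 1) *ᵥ x t - k (t + 1))) := by
    intro t ht
    rw [hx t ht, add_mulVec, ← mulVec_mulVec]
    simp only [mulVec_sub]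
    abel
  rw [eq_stm_mulVec_add_sum hcl, mulVec_stackVec N (fun τ => stm nx _ (τ + 1) N * B τ), add_assoc,
    ← sum_add_distrib]
  simp only [mulVec_add, mulVec_mulVec]

theorem exists_trajectory_stackVec_eq {nx nw N : ℕ} (A : ℕ → Matrix (Fin nx) (Fin nx) ℝ)
    (B : ℕ → Matrix (Fin nx) (Fin nw) ℝ) (a : ℕ → Fin nx → ℝ)
    (K : ℕ → Matrix (Fin nw) (Fin nx) ℝ) (k : ℕ → Fin nw → ℝ) (x₀ : Fin nx → ℝ)
    (v : Fin nw × Fin N → ℝ) :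
    ∃ x : ℕ → Fin nx → ℝ, ∃ w : ℕ → Fin nw → ℝ, x 0 = x₀
      ∧ (∀ t, x (t + 1) = A t *ᵥ x t + B t *ᵥ w t + a t)
      ∧ stackVec N (fun t => w t - K (t + 1) *ᵥ x t - k (t + 1)) = v := by
  let u : ℕ → Fin nw → ℝ := fun t i => if h : t < N then v (i, ⟨t, h⟩) else 0
  let x : ℕ → Fin nx → ℝ := fun t => Nat.rec x₀
    (fun s xs => A s *ᵥ xs + B s *ᵥ (K (s + 1) *ᵥ xs + k (s + 1) + u s) + a s) t
  refine ⟨x, fun t => K (t + 1) *ᵥ x t + k (t + 1) + u t, rfl, fun t => rfl, ?_⟩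
  funext ⟨i, τ⟩
  simp [stackVec, u, τ.isLt, add_sub_assoc]

section Riccati

variable {m n : Type*} [Fintype m] [Fintype n] [DecidableEq n]

structure IsRiccatiRecursion (N : ℕ) (A : ℕ → Matrix m m ℝ) (B : ℕ → Matrix m n ℝ)
    (a : ℕ → m → ℝ) (Qx : ℕ → Matrix m m ℝ) (Qxw : ℕ → Matrix m n ℝ) (Qw : ℕ → Matrix n n ℝ)
    (lx : ℕ → m → ℝ) (lw : ℕ → n → ℝ) (c : ℕ → ℝ) (P : ℕ → Matrix m m ℝ) (Ψ : ℕ → m → ℝ)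
    (cb : ℕ → ℝ) (G : ℕ → Matrix n n ℝ) (K : ℕ → Matrix n m ℝ) (k : ℕ → n → ℝ) : Prop where
  P_last : P N = 0
  Ψ_last : Ψ N = 0
  cb_last : cb N = 0
  G_eq : ∀ t < N, G (t + 1) = Qw t + (B t)ᵀ * P (t + 1) * B t
  posDef_G : ∀ t < N, (G (t + 1)).PosDef
  K_eq : ∀ t < N, K (t + 1) = -((G (t + 1))⁻¹ * (Qxw t + (A t)ᵀ * P (t + 1) * B t)ᵀ)
  k_eq : ∀ t < N,
    k (t + 1) = (G (t + 1))⁻¹ *ᵥ ((B t)ᵀ *ᵥ Ψ (t + 1) - lw t - (B t)ᵀ *ᵥ (P (t + 1) *ᵥ a t))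
  P_eq : ∀ t < N,
    P t = Qx t + (A t)ᵀ * P (t + 1) * A t - (K (t + 1))ᵀ * G (t + 1) * K (t + 1)
  Ψ_eq : ∀ t < N,
    Ψ t = (A t)ᵀ *ᵥ Ψ (t + 1) - (Qxw t + (A t)ᵀ * P (t + 1) * B t) *ᵥ k (t + 1)
      - lx t - (A t)ᵀ *ᵥ (P (t + 1) *ᵥ a t)
  cb_eq : ∀ t < N,
    cb t = cb (t + 1) + 1 / 2 * (a t ⬝ᵥ P (t + 1) *ᵥ a t) - Ψ (t + 1) ⬝ᵥ a t
      - 1 / 2 * (k (t + 1) ⬝ᵥ G (t + 1) *ᵥ k (t + 1)) + c t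

namespace IsRiccatiRecursion

variable {N : ℕ} {A : ℕ → Matrix m m ℝ} {B : ℕ → Matrix m n ℝ} {a : ℕ → m → ℝ}
  {Qx : ℕ → Matrix m m ℝ} {Qxw : ℕ → Matrix m n ℝ} {Qw : ℕ → Matrix n n ℝ} {lx : ℕ → m → ℝ}
  {lw : ℕ → n → ℝ} {c : ℕ → ℝ} {P : ℕ → Matrix m m ℝ} {Ψ : ℕ → m → ℝ} {cb : ℕ → ℝ}
  {G : ℕ → Matrix n n ℝ} {K : ℕ → Matrix n m ℝ} {k : ℕ → n → ℝ}

theorem isSymm_G (hR : IsRiccatiRecursion N A B a Qx Qxw Qw lx lw c P Ψ cb G K k) {t : ℕ}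
    (ht : t < N) : (G (t + 1)).IsSymm :=
  isHermitian_iff_isSymm.mp (hR.posDef_G t ht).1

theorem isSymm_P (hR : IsRiccatiRecursion N A B a Qx Qxw Qw lx lw c P Ψ cb G K k)
    (hQx : ∀ t < N, (Qx t).IsSymm) {t : ℕ} (ht : t ≤ N) : (P t).IsSymm := by
  induction ht using Nat.decreasingInduction with
  | self => rw [hR.P_last]; exact isSymm_zero
  | of_succ t ht ih =>
    rw [hR.P_eq t ht]
    exact ((hQx t ht).add (ih.transpose_mul_mul _)).sub ((hR.isSymm_G ht).transpose_mul_mul _)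

theorem stageCost_add_quadCost_succ
    (hR : IsRiccatiRecursion N A B a Qx Qxw Qw lx lw c P Ψ cb G K k)
    (hQx : ∀ t < N, (Qx t).IsSymm) {t : ℕ} (ht : t < N) (x : m → ℝ) (w : n → ℝ) :
    stageCost (Qx t) (Qxw t) (Qw t) (lx t) (lw t) (c t) x w
        + quadCost (P (t + 1)) (Ψ (t + 1)) (cb (t + 1)) (A t *ᵥ x + B t *ᵥ w + a t)
      = quadCost (P t) (Ψ t) (cb t) x
        + 1 / 2 * ((w - K (t + 1) *ᵥ x - k (t + 1))
          ⬝ᵥ G (t + 1) *ᵥ (w - K (t + 1) *ᵥ x - k (t + 1))) := by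
  have hG : IsUnit (G (t + 1)).det := (isUnit_iff_isUnit_det _).mp (hR.posDef_G t ht).isUnit
  refine stageCost_add_quadCost (hR.isSymm_P hQx ht) (hR.isSymm_G ht) (hR.G_eq t ht) ?_ ?_
    (hR.P_eq t ht) (hR.Ψ_eq t ht) (hR.cb_eq t ht) x w
  · rw [hR.K_eq t ht, Matrix.mul_neg, mul_nonsing_inv_cancel_left _ _ hG]
  · rw [hR.k_eq t ht, mulVec_mulVec, mul_nonsing_inv _ hG, one_mulVec]

theorem sum_stageCost_eq (hR : IsRiccatiRecursion N A B a Qx Qxw Qw lx lw c P Ψ cb G K k)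
    (hQx : ∀ t < N, (Qx t).IsSymm) {x : ℕ → m → ℝ} {w : ℕ → n → ℝ}
    (hx : ∀ t < N, x (t + 1) = A t *ᵥ x t + B t *ᵥ w t + a t) :
    ∑ t ∈ range N, stageCost (Qx t) (Qxw t) (Qw t) (lx t) (lw t) (c t) (x t) (w t)
      = quadCost (P 0) (Ψ 0) (cb 0) (x 0)
        + 1 / 2 * ((stackVec N fun t => w t - K (t + 1) *ᵥ x t - k (t + 1))
          ⬝ᵥ blockDiagonal (fun τ : Fin N => G (τ + 1)) *ᵥ
            stackVec N fun t => w t - K (t + 1) *ᵥ x t - k (t + 1)) := by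
  have htel := sum_range_add_eq_of_step_eq (V := fun t => quadCost (P t) (Ψ t) (cb t))
    (f := fun t x w => A t *ᵥ x + B t *ᵥ w + a t)
    (fun t ht => hR.stageCost_add_quadCost_succ hQx ht) hx
  rw [hR.P_last, hR.Ψ_last, hR.cb_last, quadCost_zero, add_zero] at htel
  rw [htel, stackVec_dotProduct_blockDiagonal_mulVec N fun t => G (t + 1), mul_sum]

end IsRiccatiRecursion

end Riccati

theorem subCost_eq_sum_stageCost_add_quadCost {nx nw N : ℕ}
    (Qx : ℕ → Matrix (Fin nx) (Fin nx) ℝ) (Qxw : ℕ → Matrix (Fin nx) (Fin nw) ℝ)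
    (Qw : ℕ → Matrix (Fin nw) (Fin nw) ℝ) (lx : ℕ → Fin nx → ℝ) (lw : ℕ → Fin nw → ℝ)
    (c : ℕ → ℝ) (Ph : Matrix (Fin nx) (Fin nx) ℝ) (Ψh : Fin nx → ℝ) (ch' : ℝ)
    (x : ℕ → Fin nx → ℝ) (w : ℕ → Fin nw → ℝ) :
    subCost nx nw N Qx Qxw Qw lx lw c Ph Ψh ch' x w
      = ∑ t ∈ range N, stageCost (Qx t) (Qxw t) (Qw t) (lx t) (lw t) (c t) (x t) (w t)
        + quadCost Ph Ψh ch' (x N) := by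
  simp only [subCost, stageCost, quadCost]
  ring

theorem redCost_eq_quadCost_add_quadCost {nx : ℕ} (Qxh Qwh Ah : Matrix (Fin nx) (Fin nx) ℝ)
    (lxh ah : Fin nx → ℝ) (ch : ℝ) (Ph : Matrix (Fin nx) (Fin nx) ℝ) (Ψh : Fin nx → ℝ)
    (ch' : ℝ) (xh wh : Fin nx → ℝ) :
    redCost nx Qxh Qwh Ah lxh ah ch Ph Ψh ch' xh wh
      = quadCost Qxh (-lxh) ch xh
        + (1 / 2 * (wh ⬝ᵥ Qwh *ᵥ wh) + quadCost Ph Ψh ch' (Ah *ᵥ xh + ah + Qwh *ᵥ wh)) := by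
  simp only [redCost, quadCost, neg_dotProduct, add_right_comm _ (Qwh *ᵥ wh) ah]
  ring

theorem uftoc_subproblem_reduction_general
    (nx nw N : ℕ)
    (A : ℕ → Matrix (Fin nx) (Fin nx) ℝ)
    (B : ℕ → Matrix (Fin nx) (Fin nw) ℝ)
    (a : ℕ → Fin nx → ℝ)
    (Qx : ℕ → Matrix (Fin nx) (Fin nx) ℝ)
    (Qxw : ℕ → Matrix (Fin nx) (Fin nw) ℝ)
    (Qw : ℕ → Matrix (Fin nw) (Fin nw) ℝ)
    (lx : ℕ → Fin nx → ℝ) (lw : ℕ → Fin nw → ℝ) (c : ℕ → ℝ)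
    (hQ : ∀ t < N, (Matrix.fromBlocks (Qx t) (Qxw t) (Qxw t)ᵀ (Qw t)).PosSemidef)
    -- preliminary (zero-terminal) Riccati recursion quantities
    (P : ℕ → Matrix (Fin nx) (Fin nx) ℝ)
    (Ψ : ℕ → Fin nx → ℝ) (cb : ℕ → ℝ)
    (G : ℕ → Matrix (Fin nw) (Fin nw) ℝ)
    (K : ℕ → Matrix (Fin nw) (Fin nx) ℝ)
    (k : ℕ → Fin nw → ℝ)
    (hPN : P N = 0) (hΨN : Ψ N = 0) (hcbN : cb N = 0)
    (hGdef : ∀ t < N, G (t + 1) = Qw t + (B t)ᵀ * P (t + 1) * B t)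
    (hGpd : ∀ t < N, (G (t + 1)).PosDef)
    (hKdef : ∀ t < N,
      K (t + 1) = -((G (t + 1))⁻¹ * (Qxw t + (A t)ᵀ * P (t + 1) * B t)ᵀ))
    (hkdef : ∀ t < N,
      k (t + 1) = (G (t + 1))⁻¹ *ᵥ
        ((B t)ᵀ *ᵥ Ψ (t + 1) - lw t - (B t)ᵀ *ᵥ (P (t + 1) *ᵥ a t)))
    (hPdef : ∀ t < N,
      P t = Qx t + (A t)ᵀ * P (t + 1) * A t - (K (t + 1))ᵀ * G (t + 1) * K (t + 1))
    (hΨdef : ∀ t < N,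
      Ψ t = (A t)ᵀ *ᵥ Ψ (t + 1) - (Qxw t + (A t)ᵀ * P (t + 1) * B t) *ᵥ k (t + 1)
            - lx t - (A t)ᵀ *ᵥ (P (t + 1) *ᵥ a t))
    (hcbdef : ∀ t < N,
      cb t = cb (t + 1) + (1 / 2) * (a t ⬝ᵥ (P (t + 1) *ᵥ a t)) - Ψ (t + 1) ⬝ᵥ a t
             - (1 / 2) * (k (t + 1) ⬝ᵥ (G (t + 1) *ᵥ k (t + 1))) + c t)
    -- closed-loop quantities of the preliminary feedback
    (Ah : Matrix (Fin nx) (Fin nx) ℝ)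
    (hAh : Ah = stm nx (fun t => A t + B t * K (t + 1)) 0 N)
    (S : Matrix (Fin nx) (Fin nw × Fin N) ℝ)
    (hS : S = fun i p =>
      (stm nx (fun t => A t + B t * K (t + 1)) ((p.2 : ℕ) + 1) N * B (p.2 : ℕ)) i p.1)
    (ah : Fin nx → ℝ)
    (hah : ah = ∑ τ ∈ Finset.range N,
      stm nx (fun t => A t + B t * K (t + 1)) (τ + 1) N *ᵥ (a τ + B τ *ᵥ k (τ + 1)))
    -- reduced problem data
    (Qbar : Matrix (Fin nw × Fin N) (Fin nw × Fin N) ℝ)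
    (hQbar : Qbar = Matrix.blockDiagonal (fun τ : Fin N => G ((τ : ℕ) + 1)))
    (Qwh : Matrix (Fin nx) (Fin nx) ℝ)
    (hQwh : Qwh = S * Qbar⁻¹ * Sᵀ)
    -- unknown terminal data and initial state
    (Ph : Matrix (Fin nx) (Fin nx) ℝ) (hPh : Ph.PosSemidef)
    (Ψh : Fin nx → ℝ) (ch' : ℝ) (xh : Fin nx → ℝ) :
    ∃ x : ℕ → Fin nx → ℝ, ∃ w : ℕ → Fin nw → ℝ,
      x 0 = xh ∧ (∀ t < N, x (t + 1) = A t *ᵥ x t + B t *ᵥ w t + a t)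
      ∧ (∀ x' : ℕ → Fin nx → ℝ, ∀ w' : ℕ → Fin nw → ℝ,
          x' 0 = xh → (∀ t < N, x' (t + 1) = A t *ᵥ x' t + B t *ᵥ w' t + a t) →
          subCost nx nw N Qx Qxw Qw lx lw c Ph Ψh ch' x w
            ≤ subCost nx nw N Qx Qxw Qw lx lw c Ph Ψh ch' x' w')
      ∧ ∃ wh : Fin nx → ℝ,
          (∀ wh' : Fin nx → ℝ,
            redCost nx (P 0) Qwh Ah (-Ψ 0) ah (cb 0) Ph Ψh ch' xh wh
              ≤ redCost nx (P 0) Qwh Ah (-Ψ 0) ah (cb 0) Ph Ψh ch' xh wh')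
          ∧ redCost nx (P 0) Qwh Ah (-Ψ 0) ah (cb 0) Ph Ψh ch' xh wh
              = subCost nx nw N Qx Qxw Qw lx lw c Ph Ψh ch' x w := by
  have hR : IsRiccatiRecursion N A B a Qx Qxw Qw lx lw c P Ψ cb G K k :=
    ⟨hPN, hΨN, hcbN, hGdef, hGpd, hKdef, hkdef, hPdef, hΨdef, hcbdef⟩
  have hQx : ∀ t < N, (Qx t).IsSymm := fun t ht =>
    (isSymm_fromBlocks_iff.mp (isHermitian_iff_isSymm.mp (hQ t ht).1)).1
  have hQbarpd : Qbar.PosDef := hQbar ▸ PosDef.blockDiagonal fun τ => hGpd τ τ.isLt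
  set F := fun v => 1 / 2 * (v ⬝ᵥ Qbar *ᵥ v) + quadCost Ph Ψh ch' (Ah *ᵥ xh + ah + S *ᵥ v)
  have hsub : ∀ x w, x 0 = xh → (∀ t < N, x (t + 1) = A t *ᵥ x t + B t *ᵥ w t + a t) →
      subCost nx nw N Qx Qxw Qw lx lw c Ph Ψh ch' x w
        = quadCost (P 0) (Ψ 0) (cb 0) xh
          + F (stackVec N fun t => w t - K (t + 1) *ᵥ x t - k (t + 1)) := by
    intro x w hx0 hx
    rw [subCost_eq_sum_stageCost_add_quadCost, hR.sum_stageCost_eq hQx hx,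
      closedLoop_final_state K k hx, hx0, ← hAh, ← hah, ← hS, ← hQbar, add_assoc]
  have hred : ∀ ŵ, redCost nx (P 0) Qwh Ah (-Ψ 0) ah (cb 0) Ph Ψh ch' xh ŵ
      = quadCost (P 0) (Ψ 0) (cb 0) xh + F (Qbar⁻¹ *ᵥ Sᵀ *ᵥ ŵ) := by
    intro ŵ
    rw [redCost_eq_quadCost_add_quadCost, neg_neg, hQwh, ← nonsing_inv_mulVec_transpose_dotProduct
      ((isUnit_iff_isUnit_det _).mp hQbarpd.isUnit), ← mulVec_mulVec, ← mulVec_mulVec]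
  obtain ⟨ŵ, hŵ⟩ := exists_reduced_minimizer hQbarpd hPh S (Ah *ᵥ xh + ah) Ψh ch'
  obtain ⟨x, w, hx0, hx, he⟩ := exists_trajectory_stackVec_eq A B a K k xh (Qbar⁻¹ *ᵥ Sᵀ *ᵥ ŵ)
  refine ⟨x, w, hx0, fun t _ => hx t, fun x' w' hx0' hx' => ?_, ŵ, fun ŵ' => ?_, ?_⟩
  · rw [hsub x w hx0 (fun t _ => hx t), hsub x' w' hx0' hx', he]
    exact (add_le_add_iff_left _).mpr (hŵ _)
  · rw [hred, hred]
    exact (add_le_add_iff_left _).mpr (hŵ _)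
  · rw [hred, hsub x w hx0 (fun t _ => hx t), he]

/-- Theorem 1: reduction of a UFTOC subproblem.  For any (unknown) terminal data
`P̂ ⪰ 0`, `Ψ̂`, `ĉ'`, the subproblem over the full horizon and the reduced problem with
a single input `ŵ ∈ ℝ^{n_x}` have equal, attained optimal values. -/
theorem uftoc_subproblem_reduction
    (nx nw N : ℕ) (hN : 1 ≤ N)
    (A : ℕ → Matrix (Fin nx) (Fin nx) ℝ)
    (B : ℕ → Matrix (Fin nx) (Fin nw) ℝ)
    (a : ℕ → Fin nx → ℝ)
    (Qx : ℕ → Matrix (Fin nx) (Fin nx) ℝ)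
    (Qxw : ℕ → Matrix (Fin nx) (Fin nw) ℝ)
    (Qw : ℕ → Matrix (Fin nw) (Fin nw) ℝ)
    (lx : ℕ → Fin nx → ℝ) (lw : ℕ → Fin nw → ℝ) (c : ℕ → ℝ)
    (hQ : ∀ t < N, (Matrix.fromBlocks (Qx t) (Qxw t) (Qxw t)ᵀ (Qw t)).PosSemidef)
    -- preliminary (zero-terminal) Riccati recursion quantities
    (P : ℕ → Matrix (Fin nx) (Fin nx) ℝ)
    (Ψ : ℕ → Fin nx → ℝ) (cb : ℕ → ℝ)
    (G : ℕ → Matrix (Fin nw) (Fin nw) ℝ)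
    (K : ℕ → Matrix (Fin nw) (Fin nx) ℝ)
    (k : ℕ → Fin nw → ℝ)
    (hPN : P N = 0) (hΨN : Ψ N = 0) (hcbN : cb N = 0)
    (hGdef : ∀ t < N, G (t + 1) = Qw t + (B t)ᵀ * P (t + 1) * B t)
    (hGpd : ∀ t < N, (G (t + 1)).PosDef)
    (hKdef : ∀ t < N,
      K (t + 1) = -((G (t + 1))⁻¹ * (Qxw t + (A t)ᵀ * P (t + 1) * B t)ᵀ))
    (hkdef : ∀ t < N,
      k (t + 1) = (G (t + 1))⁻¹ *ᵥ
        ((B t)ᵀ *ᵥ Ψ (t + 1) - lw t - (B t)ᵀ *ᵥ (P (t + 1) *ᵥ a t)))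
    (hPdef : ∀ t < N,
      P t = Qx t + (A t)ᵀ * P (t + 1) * A t - (K (t + 1))ᵀ * G (t + 1) * K (t + 1))
    (hΨdef : ∀ t < N,
      Ψ t = (A t)ᵀ *ᵥ Ψ (t + 1) - (Qxw t + (A t)ᵀ * P (t + 1) * B t) *ᵥ k (t + 1)
            - lx t - (A t)ᵀ *ᵥ (P (t + 1) *ᵥ a t))
    (hcbdef : ∀ t < N,
      cb t = cb (t + 1) + (1 / 2) * (a t ⬝ᵥ (P (t + 1) *ᵥ a t)) - Ψ (t + 1) ⬝ᵥ a t
             - (1 / 2) * (k (t + 1) ⬝ᵥ (G (t + 1) *ᵥ k (t + 1))) + c t)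
    -- closed-loop quantities of the preliminary feedback
    (Ah : Matrix (Fin nx) (Fin nx) ℝ)
    (hAh : Ah = stm nx (fun t => A t + B t * K (t + 1)) 0 N)
    (S : Matrix (Fin nx) (Fin nw × Fin N) ℝ)
    (hS : S = fun i p =>
      (stm nx (fun t => A t + B t * K (t + 1)) ((p.2 : ℕ) + 1) N * B (p.2 : ℕ)) i p.1)
    (ah : Fin nx → ℝ)
    (hah : ah = ∑ τ ∈ Finset.range N,
      stm nx (fun t => A t + B t * K (t + 1)) (τ + 1) N *ᵥ (a τ + B τ *ᵥ k (τ + 1)))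
    -- reduced problem data
    (Qbar : Matrix (Fin nw × Fin N) (Fin nw × Fin N) ℝ)
    (hQbar : Qbar = Matrix.blockDiagonal (fun τ : Fin N => G ((τ : ℕ) + 1)))
    (Qwh : Matrix (Fin nx) (Fin nx) ℝ)
    (hQwh : Qwh = S * Qbar⁻¹ * Sᵀ)
    -- unknown terminal data and initial state
    (Ph : Matrix (Fin nx) (Fin nx) ℝ) (hPh : Ph.PosSemidef)
    (Ψh : Fin nx → ℝ) (ch' : ℝ) (xh : Fin nx → ℝ) :
    ∃ x : ℕ → Fin nx → ℝ, ∃ w : ℕ → Fin nw → ℝ,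
      x 0 = xh ∧ (∀ t < N, x (t + 1) = A t *ᵥ x t + B t *ᵥ w t + a t)
      ∧ (∀ x' : ℕ → Fin nx → ℝ, ∀ w' : ℕ → Fin nw → ℝ,
          x' 0 = xh → (∀ t < N, x' (t + 1) = A t *ᵥ x' t + B t *ᵥ w' t + a t) →
          subCost nx nw N Qx Qxw Qw lx lw c Ph Ψh ch' x w
            ≤ subCost nx nw N Qx Qxw Qw lx lw c Ph Ψh ch' x' w')
      ∧ ∃ wh : Fin nx → ℝ,
          (∀ wh' : Fin nx → ℝ,
            redCost nx (P 0) Qwh Ah (-Ψ 0) ah (cb 0) Ph Ψh ch' xh wh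
              ≤ redCost nx (P 0) Qwh Ah (-Ψ 0) ah (cb 0) Ph Ψh ch' xh wh')
          ∧ redCost nx (P 0) Qwh Ah (-Ψ 0) ah (cb 0) Ph Ψh ch' xh wh
              = subCost nx nw N Qx Qxw Qw lx lw c Ph Ψh ch' x w :=
  uftoc_subproblem_reduction_general nx nw N A B a Qx Qxw Qw lx lw c hQ P Ψ cb G K k hPN hΨN hcbN
    hGdef hGpd hKdef hkdef hPdef hΨdef hcbdef Ah hAh S hS ah hah Qbar hQbar Qwh hQwh Ph hPh Ψh ch'
    xh
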